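/- Fix z_d ∈ ℝ^V and let p = softmax(z_d). There exist constants C > 0 and ε > 0 such that for every δ ∈ ℝ^V with ‖δ‖ ≤ ε (Euclidean norm), |D_KL(softmax(z_d + δ) ‖ p) − ∑_{i=1}^{V} ∑_{j=1}^{V} (1/4)·p_i·p_j·(δ_i − δ_j)²| ≤ C·‖δ‖³; that is, the KL divergence is approximated, up to a cubic error, by the weighted quadratic aggregation ∑_{i,j} α_{ij}·(δ_i − δ_j)² with weights α_{ij} = (1/4)·p_i·p_j. -/
import Mathlib


open Finset Real

/-- Softmax: `softmax(z)_i = exp (z i) / ∑ j, exp (z j)`. -/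
noncomputable def softmax {V : ℕ} (z : Fin V → ℝ) : Fin V → ℝ :=
  fun i => Real.exp (z i) / ∑ j, Real.exp (z j)

/-- KL divergence `D_KL(p‖q) = ∑ i, p i * log (p i / q i)`. -/
noncomputable def klDiv {V : ℕ} (p q : Fin V → ℝ) : ℝ :=
  ∑ i, p i * Real.log (p i / q i)

/-- Euclidean norm of a vector in `ℝ^V`. -/
noncomputable def euclNorm {V : ℕ} (δ : Fin V → ℝ) : ℝ :=
  Real.sqrt (∑ i, (δ i) ^ 2)

set_option maxHeartbeats 1000000 in
/-- Fix `z_d` and let `p = softmax z_d`. There are `C > 0` and `ε > 0`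
such that for every `δ` with `‖δ‖ ≤ ε`, the KL divergence
`D_KL(softmax (z_d + δ) ‖ p)` is approximated, up to a cubic error `C ‖δ‖³`, by the
weighted quadratic aggregation `∑ i ∑ j, (1/4) p i p j (δ i − δ j)²`. -/
theorem kl_pairwise_quadratic_aggregation {V : ℕ} (hV : 0 < V) (zd : Fin V → ℝ) :
    ∃ C > (0 : ℝ), ∃ ε > (0 : ℝ), ∀ δ : Fin V → ℝ, euclNorm δ ≤ ε →
      |klDiv (softmax (zd + δ)) (softmax zd) -
          ∑ i, ∑ j, (1 / 4) * softmax zd i * softmax zd j * (δ i - δ j) ^ 2| ≤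
        C * euclNorm δ ^ 3 := by
  haveI : Nonempty (Fin V) := ⟨⟨0, hV⟩⟩
  refine ⟨100, by norm_num, 1/8, by norm_num, fun δ hδ => ?_⟩
  set n := euclNorm δ with hn_def
  have hn0 : 0 ≤ n := Real.sqrt_nonneg _
  have hn1 : n ≤ 1/8 := hδ
  have hn2 : n^2 ≤ n/8 := by nlinarith
  have hn3 : n^3 ≤ n/64 := by nlinarith
  have hn30 : 0 ≤ n^3 := by positivity
  have hcoord : ∀ i, |δ i| ≤ n := by
    intro i
    rw [hn_def, euclNorm, ← Real.sqrt_sq_eq_abs]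
    exact Real.sqrt_le_sqrt (Finset.single_le_sum (fun j _ => sq_nonneg (δ j)) (Finset.mem_univ i))
  have hcoord1 : ∀ i, |δ i| ≤ 1 := fun i => le_trans (hcoord i) (by linarith)
  have hSpos : 0 < ∑ j, Real.exp (zd j) := Finset.sum_pos (fun j _ => Real.exp_pos _) Finset.univ_nonempty
  have hppos : ∀ i, 0 < softmax zd i := fun i => div_pos (Real.exp_pos _) hSpos
  set p := softmax zd with hp_def
  have hpsum : ∑ i, p i = 1 := by
    rw [hp_def]; unfold softmax; rw [← Finset.sum_div, div_self hSpos.ne']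
  set A := ∑ i, p i * δ i with hA_def
  set B := ∑ i, p i * δ i ^ 2 with hB_def
  set E := ∑ i, p i * Real.exp (δ i) with hE_def
  set N := ∑ i, p i * (δ i * Real.exp (δ i)) with hN_def
  have hEpos : 0 < E := by
    rw [hE_def]
    exact Finset.sum_pos (fun i _ => mul_pos (hppos i) (Real.exp_pos _)) Finset.univ_nonempty
  -- softmax of perturbed vector
  have hS'pos : 0 < ∑ j, Real.exp ((zd + δ) j) :=
    Finset.sum_pos (fun j _ => Real.exp_pos _) Finset.univ_nonempty
  have hEeq : E = (∑ j, Real.exp ((zd + δ) j)) / (∑ j, Real.exp (zd j)) := by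
    rw [hE_def, hp_def]
    unfold softmax
    rw [Finset.sum_div]
    refine Finset.sum_congr rfl fun j _ => ?_
    simp [Real.exp_add, div_mul_eq_mul_div]
  have hq : ∀ i, softmax (zd + δ) i = p i * Real.exp (δ i) / E := by
    intro i
    rw [hEeq, hp_def]
    unfold softmax
    rw [Pi.add_apply, Real.exp_add]
    field_simp
  -- KL identity
  have hterm : ∀ i, softmax (zd + δ) i * Real.log (softmax (zd + δ) i / p i) =
      p i * (δ i * Real.exp (δ i)) / E - p i * Real.exp (δ i) / E * Real.log E := by
    intro i
    rw [hq i]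
    have h1 : p i * Real.exp (δ i) / E / p i = Real.exp (δ i) / E := by
      rw [div_div, mul_comm E (p i), mul_div_mul_left _ _ (hppos i).ne']
    rw [h1, Real.log_div (Real.exp_ne_zero _) hEpos.ne', Real.log_exp]
    ring
  have hKL : klDiv (softmax (zd + δ)) p = N / E - Real.log E := by
    unfold klDiv
    rw [Finset.sum_congr rfl fun i _ => hterm i, Finset.sum_sub_distrib,
      ← Finset.sum_div, ← Finset.sum_mul, ← Finset.sum_div, ← hN_def, ← hE_def,
      div_self hEpos.ne', one_mul]
  -- quadratic identity
  have hT : (∑ i, ∑ j, (1 / 4) * p i * p j * (δ i - δ j) ^ 2) = (B - A^2)/2 := by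
    have inner : ∀ i, (∑ j, (1 / 4) * p i * p j * (δ i - δ j) ^ 2) =
        (1/4) * (p i * δ i ^ 2) - (1/2) * (p i * δ i) * A + (1/4) * p i * B := by
      intro i
      have e1 : (∑ j, (1 / 4) * p i * p j * (δ i - δ j) ^ 2) =
          ∑ j, ((1/4) * (p i * δ i ^ 2) * p j - (1/2) * (p i * δ i) * (p j * δ j)
            + (1/4) * p i * (p j * δ j ^ 2)) :=
        Finset.sum_congr rfl fun j _ => by ring
      rw [e1, Finset.sum_add_distrib, Finset.sum_sub_distrib, ← Finset.mul_sum,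
        ← Finset.mul_sum, ← Finset.mul_sum, hpsum, ← hA_def, ← hB_def, mul_one]
    rw [Finset.sum_congr rfl fun i _ => inner i, Finset.sum_add_distrib,
      Finset.sum_sub_distrib, ← Finset.mul_sum, ← Finset.sum_mul, ← Finset.mul_sum]
    rw [show (∑ x, (1:ℝ)/4 * p x * B) = B/4 * ∑ x, p x from by
      rw [Finset.mul_sum]; exact Finset.sum_congr rfl fun x _ => by ring]
    rw [hpsum, ← hA_def, ← hB_def]
    ring
  -- weighted average bound
  have key : ∀ (f : Fin V → ℝ) (c : ℝ), (∀ i, |f i| ≤ c) → |∑ i, p i * f i| ≤ c := by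
    intro f c hf
    calc |∑ i, p i * f i| ≤ ∑ i, |p i * f i| := Finset.abs_sum_le_sum_abs _ _
      _ ≤ ∑ i, p i * c := Finset.sum_le_sum fun i _ => by
          rw [abs_mul, abs_of_pos (hppos i)]
          exact mul_le_mul_of_nonneg_left (hf i) (hppos i).le
      _ = c := by rw [← Finset.sum_mul, hpsum, one_mul]
  have hAb : |A| ≤ n := by rw [hA_def]; exact key δ n hcoord
  have hBb : |B| ≤ n^2 := by
    rw [hB_def]
    refine key _ _ fun i => ?_
    rw [abs_pow]
    exact pow_le_pow_left₀ (abs_nonneg _) (hcoord i) 2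
  have hrE : |E - 1 - A - B/2| ≤ n^3 := by
    have hsplit : E - 1 - A - B/2 = ∑ i, p i * (Real.exp (δ i) - 1 - δ i - δ i^2/2) := by
      rw [show (∑ i, p i * (Real.exp (δ i) - 1 - δ i - δ i ^ 2 / 2)) =
          ∑ i, (p i * Real.exp (δ i) - p i - p i * δ i - p i * δ i ^ 2 / 2) from
        Finset.sum_congr rfl fun i _ => by ring]
      rw [Finset.sum_sub_distrib, Finset.sum_sub_distrib, Finset.sum_sub_distrib,
        ← Finset.sum_div, hpsum, ← hE_def, ← hA_def, ← hB_def]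
    rw [hsplit]
    refine key _ _ fun i => ?_
    have hb := Real.exp_bound (hcoord1 i) (n := 3) (by norm_num)
    have hs : ∑ m ∈ Finset.range 3, δ i ^ m / (m.factorial : ℝ) = 1 + δ i + δ i^2/2 := by
      norm_num [Finset.sum_range_succ, Nat.factorial]
    rw [hs] at hb
    norm_num [Nat.factorial] at hb
    have h3 : |δ i|^3 ≤ n^3 := pow_le_pow_left₀ (abs_nonneg _) (hcoord i) 3
    have heq : |Real.exp (δ i) - 1 - δ i - δ i^2/2| = |Real.exp (δ i) - (1 + δ i + δ i^2/2)| := by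
      congr 1; ring
    rw [heq]
    nlinarith [pow_nonneg (abs_nonneg (δ i)) 3]
  have hrN : |N - A - B| ≤ n^3 := by
    have hsplit : N - A - B = ∑ i, p i * (δ i * Real.exp (δ i) - δ i - δ i^2) := by
      rw [show (∑ i, p i * (δ i * Real.exp (δ i) - δ i - δ i ^ 2)) =
          ∑ i, (p i * (δ i * Real.exp (δ i)) - p i * δ i - p i * δ i ^ 2) from
        Finset.sum_congr rfl fun i _ => by ring]
      rw [Finset.sum_sub_distrib, Finset.sum_sub_distrib, ← hN_def, ← hA_def, ← hB_def]
    rw [hsplit]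
    refine key _ _ fun i => ?_
    have hb := Real.exp_bound (hcoord1 i) (n := 2) (by norm_num)
    have hs : ∑ m ∈ Finset.range 2, δ i ^ m / (m.factorial : ℝ) = 1 + δ i := by
      norm_num [Finset.sum_range_succ, Nat.factorial]
    rw [hs] at hb
    norm_num at hb
    have heq : |δ i * Real.exp (δ i) - δ i - δ i^2| = |δ i| * |Real.exp (δ i) - (1 + δ i)| := by
      rw [← abs_mul]; congr 1; ring
    rw [heq]
    calc |δ i| * |Real.exp (δ i) - (1 + δ i)| ≤ |δ i| * (δ i ^ 2 * (3/4)) :=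
          mul_le_mul_of_nonneg_left hb (abs_nonneg _)
      _ = (3/4) * (|δ i| * |δ i|^2) := by rw [← sq_abs]; ring
      _ ≤ (3/4) * (n * n^2) := by
          have h1 : |δ i| * |δ i|^2 ≤ n * n^2 :=
            mul_le_mul (hcoord i) (pow_le_pow_left₀ (abs_nonneg _) (hcoord i) 2)
              (pow_nonneg (abs_nonneg _) 2) hn0
          linarith
      _ ≤ n^3 := by nlinarith
  -- abbreviations and derived bounds
  set u := E - 1 with hu_def
  clear hq hterm key hcoord hcoord1 hSpos hS'pos hEeq hppos hpsum hδ hn_def hp_def hA_def hB_def hE_def hN_def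
  clear_value n p A B E N u
  obtain ⟨hrE1, hrE2⟩ := abs_le.mp hrE
  obtain ⟨hrN1, hrN2⟩ := abs_le.mp hrN
  obtain ⟨hA1, hA2⟩ := abs_le.mp hAb
  obtain ⟨hB1, hB2⟩ := abs_le.mp hBb
  have hn32 : n^3 ≤ n^2/2 := by
    have e : n^3 = n * n^2 := by ring
    have h := mul_le_mul_of_nonneg_right hn1 (sq_nonneg n)
    linarith [sq_nonneg n]
  have hu2n : |u| ≤ 2*n := abs_le.mpr ⟨by linarith, by linarith⟩
  have hu14 : |u| ≤ 1/4 := by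
    have : 2*n ≤ 1/4 := by linarith
    linarith [hu2n]
  have hE34 : (3:ℝ)/4 ≤ E := by
    have h := (abs_le.mp hu14).1
    rw [hu_def] at h
    linarith
  have hN2n : |N| ≤ 2*n := abs_le.mpr ⟨by linarith, by linarith⟩
  have huA : |u - A| ≤ n^2 := abs_le.mpr ⟨by linarith, by linarith⟩
  have hNA : |N - A| ≤ 2*n^2 := abs_le.mpr ⟨by linarith, by linarith⟩
  -- log bound
  have hlog1 : |(-u)| < 1 := by rw [abs_neg]; linarith [hu14]
  have hlog := Real.abs_log_sub_add_sum_range_le hlog1 2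
  have hsl : ∑ i ∈ Finset.range 2, (-u)^(i+1)/((i:ℝ)+1) = -u + u^2/2 := by
    norm_num [Finset.sum_range_succ]
  rw [hsl] at hlog
  have h1mu : (1:ℝ) - -u = E := by rw [hu_def]; ring
  rw [h1mu, abs_neg] at hlog
  have hu3 : |u|^3 ≤ 8*n^3 := by
    calc |u| ^ 3 ≤ (2*n)^3 := pow_le_pow_left₀ (abs_nonneg _) hu2n 3
      _ = 8*n^3 := by ring
  have hden : (3:ℝ)/4 ≤ 1 - |u| := by linarith [hu14]
  have hρ : |Real.log E - u + u^2/2| ≤ 16*n^3 := by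
    have heq : |Real.log E - u + u^2/2| = |(-u + u^2/2) + Real.log E| := by congr 1; ring
    rw [heq]
    calc |(-u + u^2/2) + Real.log E| ≤ |u| ^ 3 / (1 - |u|) := hlog
      _ ≤ (8*n^3)/(3/4) := div_le_div₀ (by positivity) hu3 (by norm_num) hden
      _ ≤ 16*n^3 := by linarith
  -- division terms
  set G := N * u / E with hG_def
  clear_value G
  have hE1 : E = 1 + u := by rw [hu_def]; ring
  have hNE : N / E = N - G := by
    rw [hG_def]
    field_simp
    rw [hE1]
    ring
  have hGNu : |G - N*u| ≤ 11*n^3 := by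
    have heq : G - N*u = -(N*u*u)/E := by
      rw [hG_def]
      field_simp
      rw [hE1]
      ring
    rw [heq, abs_div, abs_neg, abs_of_pos hEpos]
    have hnum : |N*u*u| ≤ 8*n^3 := by
      rw [abs_mul, abs_mul]
      calc |N| * |u| * |u| ≤ (2*n)*(2*n)*(2*n) :=
            mul_le_mul (mul_le_mul hN2n hu2n (abs_nonneg _) (by linarith)) hu2n
              (abs_nonneg _) (by positivity)
        _ = 8*n^3 := by ring
    calc |N*u*u| / E ≤ (8*n^3)/(3/4) := div_le_div₀ (by positivity) hnum (by norm_num) hE34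
      _ ≤ 11*n^3 := by linarith
  have hNuA : |N*u - A^2| ≤ 4*n^3 := by
    have heq : N*u - A^2 = N*(u - A) + A*(N - A) := by ring
    rw [heq]
    calc |N*(u-A) + A*(N-A)| ≤ |N*(u-A)| + |A*(N-A)| := abs_add_le _ _
      _ = |N| * |u - A| + |A| * |N - A| := by rw [abs_mul, abs_mul]
      _ ≤ (2*n)*n^2 + n*(2*n^2) := by
          have h1 : |N| * |u - A| ≤ (2*n)*n^2 := mul_le_mul hN2n huA (abs_nonneg _) (by linarith)
          have h2 : |A| * |N - A| ≤ n*(2*n^2) := mul_le_mul hAb hNA (abs_nonneg _) hn0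
          linarith
      _ ≤ 4*n^3 := le_of_eq (by ring)
  have hGA : |G - A^2| ≤ 15*n^3 := by
    have heq : G - A^2 = (G - N*u) + (N*u - A^2) := by ring
    rw [heq]
    calc |(G - N*u) + (N*u - A^2)| ≤ |G - N*u| + |N*u - A^2| := abs_add_le _ _
      _ ≤ 15*n^3 := by linarith
  have hu2A : |u^2 - A^2| ≤ 4*n^3 := by
    have heq : u^2 - A^2 = (u - A)*(u + A) := by ring
    rw [heq, abs_mul]
    have h1 : |u + A| ≤ 3*n := by
      calc |u + A| ≤ |u| + |A| := abs_add_le _ _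
        _ ≤ 3*n := by linarith [hu2n]
    calc |u - A| * |u + A| ≤ n^2*(3*n) :=
          mul_le_mul huA h1 (abs_nonneg _) (by positivity)
      _ ≤ 4*n^3 := by nlinarith
  -- final assembly
  rw [hKL, hT]
  have hmain : N/E - Real.log E - (B - A^2)/2 =
      (N - A - B) - (u - A - B/2) - (Real.log E - u + u^2/2) + (u^2 - A^2)/2 - (G - A^2) := by
    rw [hNE, hu_def]
    ring
  rw [hmain]
  have t1 := abs_sub ((N-A-B) - (u-A-B/2) - (Real.log E - u + u^2/2) + (u^2-A^2)/2) (G-A^2)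
  have t2 := abs_add_le ((N-A-B) - (u-A-B/2) - (Real.log E - u + u^2/2)) ((u^2-A^2)/2)
  have t3 := abs_sub ((N-A-B) - (u-A-B/2)) (Real.log E - u + u^2/2)
  have t4 := abs_sub (N-A-B) (u-A-B/2)
  have hd : |(u^2-A^2)/2| ≤ 2*n^3 := by
    rw [abs_div, abs_two]
    linarith [hu2A]
  linarith [hrN, hrE, hρ, hGA, hd, hn30, t1, t2, t3, t4]
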